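/- Let E be a finite set partitioned into nonempty parts E_1, …, E_p. For each j let X_j be a random subset of E_j, with X_1, …, X_p mutually independent, and let q ∈ [0,1]^E be defined by q_i = P[i ∈ X_j] for i ∈ E_j. Suppose that for each j and every submodular g : 2^{E_j} → ℝ one has E[g(X_j)] ≥ G(q|_{E_j}), where G is the multilinear extension of g. Then for every submodular f : 2^E → ℝ one has E[f(X_1 ∪ ⋯ ∪ X_p)] ≥ F(q), where F is the multilinear extension of f. -/

import Mathlib

/-!
Reveal the parts one at a time. For disjoint `G`, `H` the multilinear extension over `G ∪ H`
is the multilinear extension over `G` of `S ↦ F_H(R ↦ f(S ∪ R))`, and for `q ∈ [0,1]^E` this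
inner function is a nonnegative combination of the submodular functions `S ↦ f(S ∪ R)`, hence
submodular. So the dominance of the first part `X_k` bounds `F(q)` by the expectation over
`X_k` of a multilinear extension over the remaining parts, with `X_k` added to the base set;
by induction that is at most the expectation over the remaining (independent) parts.
-/

open MeasureTheory ProbabilityTheory

/-- `f : 2^E → ℝ` is submodular. -/
def Submodular {E : Type} [DecidableEq E] (f : Finset E → ℝ) : Prop :=
  ∀ S T : Finset E, S ⊆ T → ∀ e ∉ T,
    f (insert e T) - f T ≤ f (insert e S) - f S

/-- `g` is submodular as a function of subsets of the ground set `G ⊆ E`. -/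
def SubmodularOn {E : Type} [DecidableEq E] (G : Finset E) (g : Finset E → ℝ) : Prop :=
  ∀ S T : Finset E, S ⊆ T → T ⊆ G → ∀ e ∈ G, e ∉ T →
    g (insert e T) - g T ≤ g (insert e S) - g S

/-- The multilinear extension of `g` over the ground set `G ⊆ E`:
`∑_{S⊆G} g(S) ∏_{i∈S} x_i ∏_{i∈G∖S} (1−x_i)`. -/
noncomputable def multilinearOn {E : Type} [DecidableEq E] (G : Finset E)
    (g : Finset E → ℝ) (x : E → ℝ) : ℝ :=
  ∑ S ∈ G.powerset, g S * (∏ i ∈ S, x i) * ∏ i ∈ G \ S, (1 - x i)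

/-- The multilinear extension over the full ground set `E`. -/
noncomputable def multilinear {E : Type} [Fintype E] [DecidableEq E]
    (f : Finset E → ℝ) (x : E → ℝ) : ℝ :=
  multilinearOn Finset.univ f x

namespace Submodular

variable {E : Type} [DecidableEq E] {f : Finset E → ℝ}

theorem submodularOn (hf : Submodular f) (G : Finset E) : SubmodularOn G f :=
  fun S T hST _ e _ heT => hf S T hST e heT

theorem comp_union_right (hf : Submodular f) (C : Finset E) :
    Submodular (fun S => f (S ∪ C)) := by
  intro S T hST e heT
  simp only [Finset.insert_union]
  by_cases heC : e ∈ C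
  · simp [Finset.insert_eq_of_mem (Finset.mem_union_right _ heC)]
  · exact hf _ _ (Finset.union_subset_union_left hST) e (by simp [heT, heC])

theorem mul_const (hf : Submodular f) {c : ℝ} (hc : 0 ≤ c) :
    Submodular (fun S => f S * c) := by
  intro S T hST e heT
  simpa only [← sub_mul] using mul_le_mul_of_nonneg_right (hf S T hST e heT) hc

theorem finset_sum {α : Type*} {s : Finset α} {g : α → Finset E → ℝ}
    (hg : ∀ a ∈ s, Submodular (g a)) : Submodular (fun S => ∑ a ∈ s, g a S) := by
  intro S T hST e heT
  simp only [← Finset.sum_sub_distrib]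
  exact Finset.sum_le_sum fun a ha => hg a ha S T hST e heT

theorem multilinearOn {φ : Finset E → Finset E → ℝ} (hφ : ∀ R, Submodular (φ · R))
    (H : Finset E) {x : E → ℝ} (hx : ∀ i ∈ H, x i ∈ Set.Icc (0 : ℝ) 1) :
    Submodular (fun S => multilinearOn H (φ S) x) := by
  refine finset_sum fun R hR => ((hφ R).mul_const ?_).mul_const ?_
  · exact Finset.prod_nonneg fun i hi => (hx i (Finset.mem_powerset.mp hR hi)).1
  · exact Finset.prod_nonneg fun i hi => sub_nonneg.mpr (hx i (Finset.mem_sdiff.mp hi).1).2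

end Submodular

section Multilinear

variable {E : Type} [DecidableEq E]

theorem multilinearOn_empty (g : Finset E → ℝ) (x : E → ℝ) :
    multilinearOn ∅ g x = g ∅ := by
  simp [multilinearOn]

theorem multilinearOn_union {G H : Finset E} (hGH : Disjoint G H)
    (g : Finset E → ℝ) (x : E → ℝ) :
    multilinearOn (G ∪ H) g x
      = multilinearOn G (fun S => multilinearOn H (fun R => g (S ∪ R)) x) x := by
  simp only [multilinearOn, Finset.sum_mul, ← Finset.sum_product']
  symm
  refine Finset.sum_nbij' (fun p => p.1 ∪ p.2) (fun T => (T ∩ G, T ∩ H)) ?_ ?_ ?_ ?_ ?_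
  · intro p hp
    simp only [Finset.mem_product, Finset.mem_powerset] at hp ⊢
    exact Finset.union_subset_union hp.1 hp.2
  · intro T hT
    simp only [Finset.mem_product, Finset.mem_powerset]
    exact ⟨Finset.inter_subset_right, Finset.inter_subset_right⟩
  · intro p hp
    simp only [Finset.mem_product, Finset.mem_powerset] at hp
    ext i <;> simp only [Finset.mem_inter, Finset.mem_union] <;> grind [Finset.disjoint_left]
  · intro T hT
    simp only [Finset.mem_powerset] at hT
    ext i; simp only [Finset.mem_inter, Finset.mem_union]; grind
  · intro p hp
    simp only [Finset.mem_product, Finset.mem_powerset] at hp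
    have hsdiff : (G ∪ H) \ (p.1 ∪ p.2) = G \ p.1 ∪ H \ p.2 := by
      ext i; simp only [Finset.mem_sdiff, Finset.mem_union]
      grind [Finset.disjoint_left]
    rw [Finset.prod_union (hGH.mono hp.1 hp.2), hsdiff,
      Finset.prod_union (hGH.mono Finset.sdiff_subset Finset.sdiff_subset)]
    ring

end Multilinear

section Probability

variable {Ω β γ : Type*} [MeasurableSpace Ω] {μ : Measure Ω} [IsFiniteMeasure μ]
  [MeasurableSpace β] [Finite β] [MeasurableSingletonClass β]
  [MeasurableSpace γ] [Finite γ] [MeasurableSingletonClass γ]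

theorem integrable_comp_of_finite {Y : Ω → β} (hY : Measurable Y) (g : β → ℝ) :
    Integrable (fun ω => g (Y ω)) μ :=
  Integrable.of_finite.comp_measurable hY

theorem ProbabilityTheory.IndepFun.integral_comp_eq_integral_integral {Y : Ω → β} {Z : Ω → γ}
    (hYZ : IndepFun Y Z μ) (hY : Measurable Y) (hZ : Measurable Z) (φ : β → γ → ℝ) :
    ∫ ω, φ (Y ω) (Z ω) ∂μ = ∫ ω, ∫ ω', φ (Y ω) (Z ω') ∂μ ∂μ := by
  calc ∫ ω, φ (Y ω) (Z ω) ∂μ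
      = ∫ v, Function.uncurry φ v ∂(μ.map fun ω => (Y ω, Z ω)) :=
        (integral_map (f := Function.uncurry φ) (hY.prodMk hZ).aemeasurable
          (Measurable.of_discrete.aestronglyMeasurable)).symm
    _ = ∫ v, Function.uncurry φ v ∂((μ.map Y).prod (μ.map Z)) := by
        rw [hYZ.map_prod_eq_prod_map_map hY.aemeasurable hZ.aemeasurable]
    _ = ∫ b, ∫ c, φ b c ∂(μ.map Z) ∂(μ.map Y) := integral_prod _ Integrable.of_finite
    _ = ∫ ω, ∫ ω', φ (Y ω) (Z ω') ∂μ ∂μ := by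
        rw [integral_map hY.aemeasurable Measurable.of_discrete.aestronglyMeasurable]
        congr 1 with ω
        exact integral_map hZ.aemeasurable Measurable.of_discrete.aestronglyMeasurable

end Probability

section Independence

theorem Finset.biUnion_apply_eq_comp {Ω ι E : Type*} [DecidableEq E] (J : Finset ι)
    (X : ι → Ω → Finset E) :
    (fun ω => J.biUnion (X · ω))
      = (fun t : J → Finset E => Finset.univ.biUnion t) ∘ fun ω (i : J) => X i ω := by
  ext1 ω
  rw [Function.comp_apply, Finset.univ_eq_attach]
  exact Finset.attach_biUnion.symm

variable {Ω ι E : Type*} [MeasurableSpace Ω] [DecidableEq E] [Finite E]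
  [MeasurableSpace (Finset E)] [DiscreteMeasurableSpace (Finset E)] {X : ι → Ω → Finset E}

theorem measurable_finset_biUnion (hmeas : ∀ j, Measurable (X j)) (J : Finset ι) :
    Measurable fun ω => J.biUnion (X · ω) := by
  rw [Finset.biUnion_apply_eq_comp]
  exact Measurable.of_discrete.comp (measurable_pi_lambda _ fun i => hmeas i)

theorem ProbabilityTheory.iIndepFun.indepFun_biUnion [DecidableEq ι] {μ : Measure Ω}
    (hX : iIndepFun X μ) (hmeas : ∀ j, Measurable (X j)) {k : ι} {J : Finset ι} (hk : k ∉ J) :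
    IndepFun (X k) (fun ω => J.biUnion (X · ω)) μ := by
  rw [Finset.biUnion_apply_eq_comp]
  exact (hX.indepFun_finset {k} J (Finset.disjoint_singleton_left.mpr hk) hmeas).comp
    (φ := fun t => t ⟨k, Finset.mem_singleton_self k⟩)
    (ψ := fun t : J → Finset E => Finset.univ.biUnion t) Measurable.of_discrete
    Measurable.of_discrete

end Independence

section Dominance

open Function

variable {Ω ι E : Type} [MeasurableSpace Ω] {μ : Measure Ω} [IsProbabilityMeasure μ]
  [DecidableEq ι] [DecidableEq E] [Fintype E] [MeasurableSpace (Finset E)]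
  [DiscreteMeasurableSpace (Finset E)]

theorem multilinearOn_biUnion_le_integral {part : ι → Finset E}
    (hdisj : Pairwise (Disjoint on part)) {X : ι → Ω → Finset E}
    (hmeas : ∀ j, Measurable (X j)) (hindep : iIndepFun X μ) {q : E → ℝ}
    (hq : ∀ i, q i ∈ Set.Icc (0 : ℝ) 1)
    (hdom : ∀ j g, SubmodularOn (part j) g → multilinearOn (part j) g q ≤ ∫ ω, g (X j ω) ∂μ)
    {f : Finset E → ℝ} (hf : Submodular f) (J : Finset ι) (B : Finset E) :
    multilinearOn (J.biUnion part) (fun R => f (B ∪ R)) q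
      ≤ ∫ ω, f (B ∪ J.biUnion (X · ω)) ∂μ := by
  induction J using Finset.induction_on generalizing B with
  | empty => simp [multilinearOn_empty]
  | @insert k J hk ih =>
    have hdisjU : Disjoint (part k) (J.biUnion part) :=
      (Finset.disjoint_biUnion_right _ _ _).mpr fun j hj => hdisj fun h => hk (h ▸ hj)
    have hsub :
        Submodular fun S => multilinearOn (J.biUnion part) (fun R => f (B ∪ (S ∪ R))) q :=
      Submodular.multilinearOn (fun R => by
        simpa only [Finset.union_left_comm] using hf.comp_union_right (B ∪ R)) _ fun i _ => hq i
    calc multilinearOn ((insert k J).biUnion part) (fun R => f (B ∪ R)) q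
        = multilinearOn (part k)
            (fun S => multilinearOn (J.biUnion part) (fun R => f (B ∪ (S ∪ R))) q) q := by
          rw [Finset.biUnion_insert, multilinearOn_union hdisjU]
      _ ≤ ∫ ω, multilinearOn (J.biUnion part) (fun R => f (B ∪ (X k ω ∪ R))) q ∂μ :=
          hdom k _ (hsub.submodularOn _)
      _ ≤ ∫ ω, ∫ ω', f (B ∪ X k ω ∪ J.biUnion (X · ω')) ∂μ ∂μ := by
          refine integral_mono (integrable_comp_of_finite (hmeas k)
              fun S => multilinearOn (J.biUnion part) (fun R => f (B ∪ (S ∪ R))) q)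
            (integrable_comp_of_finite (hmeas k)
              fun S => ∫ ω', f (B ∪ S ∪ J.biUnion (X · ω')) ∂μ) fun ω => ?_
          simpa only [Finset.union_assoc] using ih (B ∪ X k ω)
      _ = ∫ ω, f (B ∪ (insert k J).biUnion (X · ω)) ∂μ := by
          rw [← (hindep.indepFun_biUnion hmeas hk).integral_comp_eq_integral_integral (hmeas k)
            (measurable_finset_biUnion hmeas J) fun S T => f (B ∪ S ∪ T)]
          simp only [Finset.biUnion_insert, Finset.union_assoc]

end Dominance

theorem statement13_general {E : Type} [Fintype E] [DecidableEq E]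
    (p : ℕ) (part : Fin p → Finset E)
    (hdisj : ∀ j j' : Fin p, j ≠ j' → Disjoint (part j) (part j'))
    (hcover : ∀ i : E, ∃ j, i ∈ part j)
    (Ω : Type) [MeasurableSpace Ω] (μ : Measure Ω) [IsProbabilityMeasure μ]
    (X : Fin p → Ω → Finset E)
    (hmeas : ∀ j, @Measurable Ω (Finset E) _ ⊤ (X j))
    (hindep : iIndepFun (m := fun _ => (⊤ : MeasurableSpace (Finset E))) X μ)
    (q : E → ℝ)
    (hq : ∀ j : Fin p, ∀ i ∈ part j, (μ {ω | i ∈ X j ω}).toReal = q i)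
    (hdom : ∀ (j : Fin p) (g : Finset E → ℝ), SubmodularOn (part j) g →
      multilinearOn (part j) g q ≤ ∫ ω, g (X j ω) ∂μ)
    (f : Finset E → ℝ) (hf : Submodular f) :
    multilinear f q ≤ ∫ ω, f (Finset.univ.biUnion (fun j => X j ω)) ∂μ := by
  let : MeasurableSpace (Finset E) := ⊤
  have hq01 (i : E) : q i ∈ Set.Icc (0 : ℝ) 1 := by
    obtain ⟨j, hj⟩ := hcover i
    rw [← hq j i hj]
    exact ⟨measureReal_nonneg, measureReal_le_one⟩
  have hunion : Finset.univ.biUnion part = Finset.univ :=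
    Finset.eq_univ_of_forall fun i => Finset.mem_biUnion.mpr (by simpa using hcover i)
  simpa [multilinear, hunion] using multilinearOn_biUnion_le_integral
    (fun j j' h => hdisj j j' h) hmeas hindep hq01 hdom hf Finset.univ ∅

/-- Let `E` be partitioned into nonempty parts `E_1, …, E_p`, and for each `j` let `X_j`
be a random subset of `E_j`, with `X_1, …, X_p` mutually independent and marginals
`q_i = P[i ∈ X_j]` for `i ∈ E_j`. If each `X_j` satisfies submodular dominance for every
submodular function on subsets of `E_j`, then the union `X_1 ∪ ⋯ ∪ X_p` satisfies
submodular dominance: `E[f(X_1 ∪ ⋯ ∪ X_p)] ≥ F(q)` for every submodular `f : 2^E → ℝ`. -/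
theorem statement13 {E : Type} [Fintype E] [DecidableEq E]
    (p : ℕ) (part : Fin p → Finset E)
    (hne : ∀ j, (part j).Nonempty)
    (hdisj : ∀ j j' : Fin p, j ≠ j' → Disjoint (part j) (part j'))
    (hcover : ∀ i : E, ∃ j, i ∈ part j)
    (Ω : Type) [MeasurableSpace Ω] (μ : Measure Ω) [IsProbabilityMeasure μ]
    (X : Fin p → Ω → Finset E)
    (hXsub : ∀ j ω, X j ω ⊆ part j)
    (hmeas : ∀ j, @Measurable Ω (Finset E) _ ⊤ (X j))
    (hindep : iIndepFun (m := fun _ => (⊤ : MeasurableSpace (Finset E))) X μ)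
    (q : E → ℝ)
    (hq : ∀ j : Fin p, ∀ i ∈ part j, (μ {ω | i ∈ X j ω}).toReal = q i)
    (hdom : ∀ (j : Fin p) (g : Finset E → ℝ), SubmodularOn (part j) g →
      multilinearOn (part j) g q ≤ ∫ ω, g (X j ω) ∂μ)
    (f : Finset E → ℝ) (hf : Submodular f) :
    multilinear f q ≤ ∫ ω, f (Finset.univ.biUnion (fun j => X j ω)) ∂μ :=
  statement13_general p part hdisj hcover Ω μ X hmeas hindep q hq hdom f hf
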